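/- Let k ≥ 1 and suppose ℂ^k contains a SIC-POVM. Then for every unit vector a ∈ ℂ^k and every real ε with 0 ≤ ε ≤ (k+1)/(2k), the matrix P_sym^{k,2} − ε·(a a^*) ⊗ (a a^*) ∈ M_k(ℂ) ⊗ M_k(ℂ) ≅ M_{k²}(ℂ) is separable. -/

import Mathlib

/-
A SIC-POVM `w` is a complex projective 2-design. Indeed `S = ∑ᵢ (wᵢ wᵢ*) ⊗ (wᵢ wᵢ*)` is Hermitian,
is fixed by the flip, hence satisfies `S P_sym = S`, and has `tr S = k²` and
`tr S² = ∑ᵢⱼ |⟨wᵢ, wⱼ⟩|⁴ = k² · 2k/(k+1)`; these moments make the Hilbert–Schmidt norm of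
`S - (2k/(k+1)) P_sym` vanish. Moving the SIC-POVM by a unitary that sends one of its vectors to `a`
gives `P_sym = ∑ᵢ (k+1)/(2k) (wᵢ wᵢ*) ⊗ (wᵢ wᵢ*)` with `w_{i₀} = a`, and subtracting
`ε (a a*) ⊗ (a a*)` only lowers the `i₀`-th weight to `(k+1)/(2k) - ε ≥ 0`.
-/

open Matrix Finset
open scoped Kronecker

/-- The flip operator on ℂ^k ⊗ ℂ^k. -/
noncomputable def flipOp (k : ℕ) : Matrix (Fin k × Fin k) (Fin k × Fin k) ℂ :=
  Matrix.of fun p q => if p.1 = q.2 ∧ p.2 = q.1 then 1 else 0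

/-- Orthogonal projection onto the symmetric subspace of ℂ^k ⊗ ℂ^k. -/
noncomputable def psym (k : ℕ) : Matrix (Fin k × Fin k) (Fin k × Fin k) ℂ :=
  (1 / 2 : ℂ) • (1 + flipOp k)

/-- Separability of a matrix in M_k(ℂ) ⊗ M_k(ℂ) ≅ M_{k²}(ℂ). -/
def Separable {k : ℕ} (δ : Matrix (Fin k × Fin k) (Fin k × Fin k) ℂ) : Prop :=
  ∃ (N : ℕ) (x y : Fin N → Fin k → ℂ),
    δ = ∑ i, (Matrix.vecMulVec (x i) (star (x i))) ⊗ₖ (Matrix.vecMulVec (y i) (star (y i)))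

/-- ℂ^k contains a SIC-POVM: k² unit vectors with pairwise squared overlaps 1/(k+1). -/
def HasSICPOVM (k : ℕ) : Prop :=
  ∃ v : Fin (k ^ 2) → Fin k → ℂ,
    (∀ i, ∑ a, Complex.normSq (v i a) = 1) ∧
    ∀ i j, i ≠ j → ‖∑ a, star (v i a) * v j a‖ ^ 2 = 1 / ((k : ℝ) + 1)

open scoped ComplexOrder in
lemma Matrix.IsHermitian.eq_smul_of_trace_eq {m 𝕜 : Type*} [Fintype m] [RCLike 𝕜]
    {S Q : Matrix m m 𝕜} (hS : S.IsHermitian) (hQ : Q.IsHermitian) (hQQ : Q * Q = Q)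
    (hSQ : S * Q = S) {c : ℝ} (h₁ : trace (S * S) = c * trace S)
    (h₂ : trace S = c * trace Q) : S = (c : 𝕜) • Q := by
  have hQS : Q * S = S := by
    simpa only [conjTranspose_mul, hS.eq, hQ.eq] using congrArg (fun M ↦ Mᴴ) hSQ
  have hsq : (S - (c : 𝕜) • Q)ᴴ * (S - (c : 𝕜) • Q)
      = S * S - (2 * c : 𝕜) • S + (c * c : 𝕜) • Q := by
    simp only [conjTranspose_sub, conjTranspose_smul, hS.eq, hQ.eq, RCLike.star_def,
      RCLike.conj_ofReal, sub_mul, mul_sub, Matrix.mul_smul, smul_mul_assoc,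
      hSQ, hQS, hQQ]
    module
  rw [← sub_eq_zero, ← trace_conjTranspose_mul_self_eq_zero_iff, hsq]
  simp only [trace_add, trace_sub, trace_smul, smul_eq_mul, h₁, h₂]
  ring

lemma exists_linearIsometryEquiv_apply_eq {𝕜 E : Type*} [RCLike 𝕜] [NormedAddCommGroup E]
    [InnerProductSpace 𝕜 E] [FiniteDimensional 𝕜 E] {u a : E} (hu : ‖u‖ = 1) (ha : ‖a‖ = 1) :
    ∃ L : E ≃ₗᵢ[𝕜] E, L u = a := by
  have : Nontrivial E := ⟨u, 0, by rintro rfl; simp at hu⟩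
  let i₀ : Fin (Module.finrank 𝕜 E) := ⟨0, Module.finrank_pos⟩
  have extend (x : E) (hx : ‖x‖ = 1) : ∃ b : OrthonormalBasis (Fin (Module.finrank 𝕜 E)) 𝕜 E,
      b i₀ = x := by
    obtain ⟨b, hb⟩ := Orthonormal.exists_orthonormalBasis_extension_of_card_eq
      (Fintype.card_fin _).symm (s := {i₀}) (v := fun _ ↦ x)
      (orthonormal_subsingleton_iff.mpr fun _ ↦ hx)
    exact ⟨b, hb i₀ rfl⟩
  obtain ⟨b, rfl⟩ := extend u hu
  obtain ⟨b', rfl⟩ := extend a ha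
  exact ⟨b.repr.trans b'.repr.symm, by simp⟩

section RankOne

variable {n : Type*} [Fintype n]

lemma star_dotProduct_self_eq_sum_normSq (x : n → ℂ) :
    star x ⬝ᵥ x = ((∑ a, Complex.normSq (x a) : ℝ) : ℂ) := by
  simp [dotProduct, Complex.normSq_eq_conj_mul_self]

lemma star_dotProduct_eq_inner (x y : n → ℂ) :
    star x ⬝ᵥ y = inner ℂ (WithLp.toLp 2 x) (WithLp.toLp 2 y) := by
  rw [EuclideanSpace.inner_toLp_toLp, dotProduct_comm]

lemma trace_vecMulVec_star_mul_vecMulVec_star (x y : n → ℂ) :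
    trace (vecMulVec x (star x) * vecMulVec y (star y))
      = (Complex.normSq (star x ⬝ᵥ y) : ℂ) := by
  rw [vecMulVec_mul_vecMulVec, trace_vecMulVec, dotProduct_smul, dotProduct_star,
    dotProduct_comm y, smul_eq_mul, Complex.star_def, Complex.mul_conj]

end RankOne

section Flip

variable {k : ℕ}

lemma mul_flipOp_apply (A : Matrix (Fin k × Fin k) (Fin k × Fin k) ℂ) (p q : Fin k × Fin k) :
    (A * flipOp k) p q = A p q.swap := by
  simp [mul_apply, flipOp, Fintype.sum_prod_type, ite_and, eq_comm, Prod.swap]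

lemma flipOp_mul_flipOp : flipOp k * flipOp k = 1 := by
  ext p q
  rw [mul_flipOp_apply]
  simp [flipOp, one_apply, Prod.ext_iff]

lemma flipOp_isHermitian : (flipOp k).IsHermitian := by
  ext p q
  simp only [flipOp, conjTranspose_apply, of_apply]
  split_ifs <;> simp_all

lemma trace_flipOp : trace (flipOp k) = k := by
  simp [Matrix.trace, flipOp, Fintype.sum_prod_type, ite_and]

lemma vecMulVec_kronecker_vecMulVec_mul_flipOp (x y : Fin k → ℂ) :
    (vecMulVec x y ⊗ₖ vecMulVec x y) * flipOp k = vecMulVec x y ⊗ₖ vecMulVec x y := by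
  ext p q
  simp only [mul_flipOp_apply, kroneckerMap_apply, vecMulVec_apply, Prod.fst_swap, Prod.snd_swap]
  ring

lemma psym_isHermitian : (psym k).IsHermitian := by
  simp [psym, IsHermitian, conjTranspose_smul, flipOp_isHermitian.eq]

lemma psym_mul_psym : psym k * psym k = psym k := by
  simp only [psym, smul_mul_smul, add_mul, mul_add, one_mul, mul_one, flipOp_mul_flipOp]
  module

lemma trace_psym : trace (psym k) = k * (k + 1) / 2 := by
  simp [psym, trace_flipOp]
  ring

lemma mul_psym_of_mul_flipOp {S : Matrix (Fin k × Fin k) (Fin k × Fin k) ℂ}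
    (h : S * flipOp k = S) : S * psym k = S := by
  simp only [psym, Matrix.mul_smul, mul_add, mul_one, h]
  module

end Flip

section SIC

variable {ι : Type*} [Fintype ι] {k : ℕ}

def IsSIC (w : ι → Fin k → ℂ) : Prop :=
  Fintype.card ι = k ^ 2 ∧ (∀ i, star (w i) ⬝ᵥ w i = 1) ∧
    ∀ i j, i ≠ j → Complex.normSq (star (w i) ⬝ᵥ w j) = 1 / (k + 1)

lemma HasSICPOVM.exists_isSIC (h : HasSICPOVM k) : ∃ v : Fin (k ^ 2) → Fin k → ℂ, IsSIC v := by
  obtain ⟨v, hunit, hoverlap⟩ := h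
  refine ⟨v, Fintype.card_fin _, fun i ↦ ?_, fun i j hij ↦ ?_⟩
  · rw [star_dotProduct_self_eq_sum_normSq, hunit, Complex.ofReal_one]
  · rw [← Complex.sq_norm]
    exact hoverlap i j hij

lemma IsSIC.sum_normSq_sq {w : ι → Fin k → ℂ} (hw : IsSIC w) (i : ι) :
    ∑ j, Complex.normSq (star (w i) ⬝ᵥ w j) ^ 2 = 2 * k / (k + 1) := by
  classical
  obtain ⟨hcard, hunit, hoverlap⟩ := hw
  rw [← Finset.add_sum_erase _ _ (mem_univ i), hunit, Complex.normSq_one,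
    Finset.sum_congr rfl fun j hj ↦ by rw [hoverlap i j (Finset.ne_of_mem_erase hj).symm],
    sum_const, card_erase_of_mem (mem_univ i), card_univ, nsmul_eq_mul,
    Nat.cast_pred (Fintype.card_pos_iff.mpr ⟨i⟩), hcard]
  field_simp
  push_cast
  ring

lemma IsSIC.sum_kronecker_eq_smul_psym {w : ι → Fin k → ℂ} (hw : IsSIC w) :
    ∑ i, vecMulVec (w i) (star (w i)) ⊗ₖ vecMulVec (w i) (star (w i))
      = ((2 * k / (k + 1) : ℝ) : ℂ) • psym k := by
  set P : ι → Matrix (Fin k) (Fin k) ℂ := fun i ↦ vecMulVec (w i) (star (w i))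
  have htrace : trace (∑ i, P i ⊗ₖ P i) = k ^ 2 := by
    have hP : ∀ i, trace (P i) = 1 := fun i ↦ by rw [trace_vecMulVec, dotProduct_comm, hw.2.1]
    simp [trace_sum, trace_kronecker, hP, hw.1]
  have htrace_sq : trace ((∑ i, P i ⊗ₖ P i) * ∑ j, P j ⊗ₖ P j)
      = ∑ i, ((∑ j, Complex.normSq (star (w i) ⬝ᵥ w j) ^ 2 : ℝ) : ℂ) := by
    rw [sum_mul, trace_sum]
    simp only [mul_sum, trace_sum, ← mul_kronecker_mul, trace_kronecker,
      trace_vecMulVec_star_mul_vecMulVec_star, P]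
    push_cast
    simp only [sq]
  apply IsHermitian.eq_smul_of_trace_eq (c := 2 * k / (k + 1))
  · simp [IsHermitian, conjTranspose_sum, conjTranspose_kronecker]
  · exact psym_isHermitian
  · exact psym_mul_psym
  · exact mul_psym_of_mul_flipOp <| by
      simp only [sum_mul, vecMulVec_kronecker_vecMulVec_mul_flipOp]
  · rw [htrace_sq, htrace]
    simp only [hw.sum_normSq_sq, sum_const, card_univ, hw.1, nsmul_eq_mul]
    push_cast
    ring
  · rw [htrace, trace_psym]
    push_cast
    field_simp

lemma IsSIC.exists_apply_eq {v : ι → Fin k → ℂ} (hv : IsSIC v) (i₀ : ι) {a : Fin k → ℂ}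
    (ha : star a ⬝ᵥ a = 1) : ∃ w : ι → Fin k → ℂ, IsSIC w ∧ w i₀ = a := by
  have norm_eq_one (x : Fin k → ℂ) (hx : star x ⬝ᵥ x = 1) : ‖WithLp.toLp 2 x‖ = 1 := by
    rw [← pow_eq_one_iff_of_nonneg (norm_nonneg _) two_ne_zero, ← inner_self_eq_norm_sq (𝕜 := ℂ),
      ← star_dotProduct_eq_inner, hx, RCLike.one_re]
  obtain ⟨L, hL⟩ := exists_linearIsometryEquiv_apply_eq (𝕜 := ℂ)
    (norm_eq_one _ (hv.2.1 i₀)) (norm_eq_one a ha)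
  let w i := (L (WithLp.toLp 2 (v i))).ofLp
  have gram (i j : ι) : star (w i) ⬝ᵥ w j = star (v i) ⬝ᵥ v j := by
    simp only [star_dotProduct_eq_inner, w, WithLp.toLp_ofLp, L.inner_map_map]
  refine ⟨w, ⟨hv.1, fun i ↦ ?_, fun i j hij ↦ ?_⟩, by simp [w, hL]⟩
  · rw [gram, hv.2.1]
  · rw [gram, hv.2.2 i j hij]

end SIC

lemma separable_sum_smul_kronecker {ι : Type*} [Fintype ι] {k : ℕ} (t : ι → ℝ)
    (ht : ∀ i, 0 ≤ t i) (x y : ι → Fin k → ℂ) :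
    Separable (∑ i, (t i : ℂ) •
      (vecMulVec (x i) (star (x i)) ⊗ₖ vecMulVec (y i) (star (y i)))) := by
  let e := (Fintype.equivFin ι).symm
  refine ⟨Fintype.card ι, fun m ↦ (√(t (e m)) : ℂ) • x (e m), fun m ↦ y (e m), ?_⟩
  rw [← e.sum_comp]
  refine sum_congr rfl fun m _ ↦ ?_
  have hsqrt : (√(t (e m)) : ℂ) * star (√(t (e m)) : ℂ) = t (e m) := by
    rw [Complex.star_def, Complex.conj_ofReal, ← Complex.ofReal_mul, Real.mul_self_sqrt (ht _)]
  rw [star_smul, smul_vecMulVec, vecMulVec_smul, smul_smul, hsqrt, smul_kronecker]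

theorem psym_minus_product_separable_sic_general (k : ℕ) (hk : 1 ≤ k) (hsic : HasSICPOVM k)
    (a : Fin k → ℂ) (ha : ∑ i, Complex.normSq (a i) = 1)
    (ε : ℝ) (hε : ε ≤ ((k : ℝ) + 1) / (2 * k)) :
    Separable (psym k - (ε : ℂ) •
      ((Matrix.vecMulVec a (star a)) ⊗ₖ (Matrix.vecMulVec a (star a)))) := by
  let i₀ : Fin (k ^ 2) := ⟨0, pow_pos hk 2⟩
  obtain ⟨v, hv⟩ := hsic.exists_isSIC
  obtain ⟨w, hw, rfl⟩ := hv.exists_apply_eq i₀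
    (by rw [star_dotProduct_self_eq_sum_normSq, ha, Complex.ofReal_one])
  set c : ℝ := ((k : ℝ) + 1) / (2 * k)
  set Q : Fin (k ^ 2) → Matrix (Fin k × Fin k) (Fin k × Fin k) ℂ :=
    fun i ↦ vecMulVec (w i) (star (w i)) ⊗ₖ vecMulVec (w i) (star (w i))
  have hpsym : psym k = ∑ i, (c : ℂ) • Q i := by
    rw [← smul_sum, hw.sum_kronecker_eq_smul_psym, smul_smul, ← Complex.ofReal_mul]
    have hc : c * (2 * k / (k + 1)) = 1 := by
      have hk0 : (k : ℝ) ≠ 0 := Nat.cast_ne_zero.mpr (by omega)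
      simp only [c]
      field_simp
    rw [hc, Complex.ofReal_one, one_smul]
  let t : Fin (k ^ 2) → ℝ := fun i ↦ c - (Pi.single i₀ ε : Fin (k ^ 2) → ℝ) i
  have hdecomp : psym k - (ε : ℂ) • Q i₀ = ∑ i, (t i : ℂ) • Q i := by
    simp [t, hpsym, sub_smul, sum_sub_distrib, Pi.single_apply]
  rw [hdecomp]
  refine separable_sum_smul_kronecker t (fun i ↦ ?_) _ _
  rcases eq_or_ne i i₀ with rfl | hi
  · simpa [t] using hε
  · simp only [t, Pi.single_eq_of_ne hi, sub_zero, c]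
    positivity

theorem psym_minus_product_separable_sic (k : ℕ) (hk : 1 ≤ k) (hsic : HasSICPOVM k)
    (a : Fin k → ℂ) (ha : ∑ i, Complex.normSq (a i) = 1)
    (ε : ℝ) (hε0 : 0 ≤ ε) (hε : ε ≤ ((k : ℝ) + 1) / (2 * k)) :
    Separable (psym k - (ε : ℂ) •
      ((Matrix.vecMulVec a (star a)) ⊗ₖ (Matrix.vecMulVec a (star a)))) :=
  psym_minus_product_separable_sic_general k hk hsic a ha ε hε
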